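/- Let H be a real separable Hilbert space with orthonormal system (e_k)_{k∈ℕ}, let (Ω, 𝓕, P) be a probability space, let 0 ≤ t ≤ T, let ε_L ≥ 0, and let (η_k)_{k∈ℕ} be nonnegative reals with ∑_k η_k < ∞. Let (X_k)_{k∈ℕ} be real-valued square-integrable random variables with E(X_k²) = t for all k, and let Y_1, …, Y_N be real-valued square-integrable random variables with E((X_k − Y_k)²) ≤ ε_L for k = 1, …, N. Then the series L = ∑_{k∈ℕ} √η_k · X_k · e_k converges in L²(Ω; H), and with L̃_N = ∑_{k=1}^N √η_k · Y_k · e_k it holds that E(‖L − L̃_N‖²_H) ≤ t·∑_{k>N} η_k + ε_L·∑_{k=1}^N η_k ≤ T·∑_{k>N} η_k + ε_L·∑_{k=1}^N η_k. -/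

import Mathlib

/-!
Expanding in the orthonormal system, Parseval's identity turns `‖L − L̃_N‖²` pointwise into
`∑_{k<N} η_k (X_k − Y_k)² + ∑_{k≥N} η_k X_k²`, as soon as the coefficients of `L` are square
summable. They are almost surely, because the nonnegative series `∑ η_k X_k²` has finite
expectation `t ∑ η_k`. Integrating the series term by term gives the exact error
`E‖L − L̃_N‖² = ∑_{k<N} η_k E(X_k − Y_k)² + t ∑_{k≥N} η_k`, from which both the mean-square
convergence of the series and the bound follow.
-/

open MeasureTheory Filter Finset

section SeriesOfIntegrable

variable {ι α E : Type*} [Countable ι] [MeasurableSpace α] {μ : Measure α}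
  [NormedAddCommGroup E] [CompleteSpace E] {F : ι → α → E}

theorem exists_integrable_ae_hasSum_of_summable_integral_norm
    (hF_int : ∀ i, Integrable (F i) μ) (hF_sum : Summable fun i ↦ ∫ a, ‖F i a‖ ∂μ) :
    ∃ G : α → E, Integrable G μ ∧ ∀ᵐ a ∂μ, HasSum (fun i ↦ F i a) (G a) := by
  -- The series converges absolutely in `L¹`, and an `L¹` sum is also an a.e. pointwise sum.
  set F₁ : ι → α →₁[μ] E := fun i ↦ (hF_int i).toL1 (F i)
  have hF₁ : ∑' i, ‖F₁ i‖ₑ ≠ ⊤ := by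
    refine tsum_enorm_ne_top_iff_summable_norm.2 (hF_sum.congr fun i ↦ ?_)
    exact (L1.norm_of_fun_eq_integral_norm (hF_int i)).symm
  refine ⟨⇑(∑' i, F₁ i), L1.integrable_coeFn _, ?_⟩
  filter_upwards [Lp.hasSum_coeFn_tsum hF₁, ae_all_iff.2 fun i ↦ (hF_int i).coeFn_toL1]
    with a hsum hF₁_eq
  simpa only [F₁, hF₁_eq] using hsum

theorem ae_summable_of_summable_integral_norm
    (hF_int : ∀ i, Integrable (F i) μ) (hF_sum : Summable fun i ↦ ∫ a, ‖F i a‖ ∂μ) :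
    ∀ᵐ a ∂μ, Summable fun i ↦ F i a := by
  obtain ⟨G, -, hG⟩ := exists_integrable_ae_hasSum_of_summable_integral_norm hF_int hF_sum
  filter_upwards [hG] with a ha using ha.summable

theorem integrable_tsum_of_summable_integral_norm
    (hF_int : ∀ i, Integrable (F i) μ) (hF_sum : Summable fun i ↦ ∫ a, ‖F i a‖ ∂μ) :
    Integrable (fun a ↦ ∑' i, F i a) μ := by
  obtain ⟨G, hG_int, hG⟩ := exists_integrable_ae_hasSum_of_summable_integral_norm hF_int hF_sum
  exact hG_int.congr (by filter_upwards [hG] with a ha using ha.tsum_eq.symm)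

end SeriesOfIntegrable

namespace Orthonormal

variable {H : Type*} [NormedAddCommGroup H] [InnerProductSpace ℝ H]

theorem norm_sum_smul_sq {ι : Type*} {e : ι → H} (he : Orthonormal ℝ e) (c : ι → ℝ)
    (s : Finset ι) : ‖∑ k ∈ s, c k • e k‖ ^ 2 = ∑ k ∈ s, c k ^ 2 := by
  simpa [LinearIsometry.toSpanSingleton_apply, Real.norm_eq_abs, sq_abs]
    using he.orthogonalFamily.norm_sum c s

variable [CompleteSpace H]

theorem summable_smul_of_summable_sq {ι : Type*} {e : ι → H} (he : Orthonormal ℝ e)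
    {c : ι → ℝ} (hc : Summable fun k ↦ c k ^ 2) : Summable fun k ↦ c k • e k := by
  simpa [LinearIsometry.toSpanSingleton_apply] using
    (he.orthogonalFamily.summable_iff_norm_sq_summable c).2
      (by simpa [Real.norm_eq_abs, sq_abs] using hc)

theorem norm_tsum_smul_sq {ι : Type*} {e : ι → H} (he : Orthonormal ℝ e) {c : ι → ℝ}
    (hc : Summable fun k ↦ c k ^ 2) : ‖∑' k, c k • e k‖ ^ 2 = ∑' k, c k ^ 2 := by
  refine (HasSum.tsum_eq ?_).symm
  have hnorm_sq :=
    ((continuous_norm.pow 2).tendsto _).comp (he.summable_smul_of_summable_sq hc).hasSum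
  exact hnorm_sq.congr fun s ↦ he.norm_sum_smul_sq c s

theorem norm_tsum_smul_sub_sum_smul_sq {e : ℕ → H} (he : Orthonormal ℝ e) {a : ℕ → ℝ}
    (ha : Summable fun k ↦ a k ^ 2) (b : ℕ → ℝ) (n : ℕ) :
    ‖∑' k, a k • e k - ∑ k ∈ range n, b k • e k‖ ^ 2
      = ∑ k ∈ range n, (a k - b k) ^ 2 + ∑' k, a (k + n) ^ 2 := by
  set c : ℕ → ℝ := fun k ↦ if k < n then a k - b k else a k
  have hc_head : ∀ k ∈ range n, c k = a k - b k := fun k hk ↦ if_pos (mem_range.1 hk)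
  have hc_tail : ∀ k, c (k + n) = a (k + n) := fun k ↦ if_neg (by omega)
  have hc : Summable fun k ↦ c k ^ 2 :=
    (summable_nat_add_iff n).1 (by simpa only [hc_tail] using (summable_nat_add_iff n).2 ha)
  have hvec : ∑' k, a k • e k - ∑ k ∈ range n, b k • e k = ∑' k, c k • e k := by
    have hc_split := (he.summable_smul_of_summable_sq hc).sum_add_tsum_nat_add n
    rw [← (he.summable_smul_of_summable_sq ha).sum_add_tsum_nat_add n, ← hc_split,
      sum_congr rfl fun k hk ↦ (congrArg (· • e k) (hc_head k hk)).trans (sub_smul _ _ _)]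
    simp only [hc_tail, sum_sub_distrib]
    abel
  rw [hvec, he.norm_tsum_smul_sq hc, ← hc.sum_add_tsum_nat_add n,
    sum_congr rfl fun k hk ↦ by rw [hc_head k hk]]
  simp only [hc_tail]

end Orthonormal

section SquareSeries

variable {Ω : Type*} [MeasurableSpace Ω] {μ : Measure Ω}

theorem Orthonormal.memLp_two_tsum_smul {H : Type*} [NormedAddCommGroup H]
    [InnerProductSpace ℝ H] [CompleteSpace H] {e : ℕ → H} (he : Orthonormal ℝ e)
    {a : ℕ → Ω → ℝ} (ha_meas : ∀ k, AEStronglyMeasurable (a k) μ)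
    (ha_sum : ∀ᵐ ω ∂μ, Summable fun k ↦ a k ω ^ 2)
    (ha_int : Integrable (fun ω ↦ ∑' k, a k ω ^ 2) μ) :
    MemLp (fun ω ↦ ∑' k, a k ω • e k) 2 μ := by
  have hmeas : AEStronglyMeasurable (fun ω ↦ ∑' k, a k ω • e k) μ := by
    refine aestronglyMeasurable_of_tendsto_ae atTop
      (fun n ↦ (range n).aestronglyMeasurable_fun_sum fun k _ ↦ (ha_meas k).smul_const (e k)) ?_
    filter_upwards [ha_sum] with ω hω
    exact (he.summable_smul_of_summable_sq hω).hasSum.tendsto_sum_nat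
  refine (memLp_two_iff_integrable_sq_norm hmeas).2 (ha_int.congr ?_)
  filter_upwards [ha_sum] with ω hω
  exact (he.norm_tsum_smul_sq hω).symm

variable {η : ℕ → ℝ} {X : ℕ → Ω → ℝ} {t : ℝ}

theorem summable_integral_norm_mul_sq (hη : ∀ k, 0 ≤ η k) (hsum : Summable η)
    (hXvar : ∀ k, ∫ ω, X k ω ^ 2 ∂μ = t) :
    Summable fun k ↦ ∫ ω, ‖η k * X k ω ^ 2‖ ∂μ := by
  refine (hsum.mul_right t).congr fun k ↦ ?_
  simp_rw [Real.norm_of_nonneg (mul_nonneg (hη k) (sq_nonneg _)), integral_const_mul, hXvar]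

theorem integral_tsum_mul_sq (hη : ∀ k, 0 ≤ η k) (hsum : Summable η)
    (hX : ∀ k, MemLp (X k) 2 μ) (hXvar : ∀ k, ∫ ω, X k ω ^ 2 ∂μ = t) :
    ∫ ω, ∑' k, η k * X k ω ^ 2 ∂μ = t * ∑' k, η k := by
  rw [← integral_tsum_of_summable_integral_norm (fun k ↦ (hX k).integrable_sq.const_mul _)
    (summable_integral_norm_mul_sq hη hsum hXvar), ← tsum_mul_left]
  simp_rw [integral_const_mul, hXvar, mul_comm]

theorem sqrt_mul_sq_eq {a : ℝ} (ha : 0 ≤ a) (x : ℝ) : (√a * x) ^ 2 = a * x ^ 2 := by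
  rw [mul_pow, Real.sq_sqrt ha]

theorem ae_summable_sqrt_mul_sq (hη : ∀ k, 0 ≤ η k) (hsum : Summable η)
    (hX : ∀ k, MemLp (X k) 2 μ) (hXvar : ∀ k, ∫ ω, X k ω ^ 2 ∂μ = t) :
    ∀ᵐ ω ∂μ, Summable fun k ↦ (√(η k) * X k ω) ^ 2 := by
  filter_upwards [ae_summable_of_summable_integral_norm
    (fun k ↦ (hX k).integrable_sq.const_mul _) (summable_integral_norm_mul_sq hη hsum hXvar)]
    with ω hω
  simpa only [sqrt_mul_sq_eq (hη _)] using hω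

variable {H : Type*} [NormedAddCommGroup H] [InnerProductSpace ℝ H] [CompleteSpace H]
  {e : ℕ → H}

theorem Orthonormal.memLp_two_tsum_sqrt_mul_smul (he : Orthonormal ℝ e) (hη : ∀ k, 0 ≤ η k)
    (hsum : Summable η) (hX : ∀ k, MemLp (X k) 2 μ) (hXvar : ∀ k, ∫ ω, X k ω ^ 2 ∂μ = t) :
    MemLp (fun ω ↦ ∑' k, (√(η k) * X k ω) • e k) 2 μ := by
  refine he.memLp_two_tsum_smul (fun k ↦ (hX k).1.const_mul _)
    (ae_summable_sqrt_mul_sq hη hsum hX hXvar) ?_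
  simp_rw [sqrt_mul_sq_eq (hη _)]
  exact integrable_tsum_of_summable_integral_norm (fun k ↦ (hX k).integrable_sq.const_mul _)
    (summable_integral_norm_mul_sq hη hsum hXvar)

theorem Orthonormal.integral_norm_tsum_sqrt_mul_smul_sub_sum_sq (he : Orthonormal ℝ e)
    (hη : ∀ k, 0 ≤ η k) (hsum : Summable η) (hX : ∀ k, MemLp (X k) 2 μ)
    (hXvar : ∀ k, ∫ ω, X k ω ^ 2 ∂μ = t) {n : ℕ} {Z : ℕ → Ω → ℝ}
    (hZ : ∀ k < n, MemLp (Z k) 2 μ) :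
    ∫ ω, ‖∑' k, (√(η k) * X k ω) • e k - ∑ k ∈ range n, (√(η k) * Z k ω) • e k‖ ^ 2 ∂μ
      = ∑ k ∈ range n, η k * ∫ ω, (X k ω - Z k ω) ^ 2 ∂μ + t * ∑' k, η (k + n) := by
  have hsum_n : Summable fun k ↦ η (k + n) := (summable_nat_add_iff n).2 hsum
  have hhead_int : ∀ k ∈ range n, Integrable (fun ω ↦ η k * (X k ω - Z k ω) ^ 2) μ :=
    fun k hk ↦ ((hX k).sub (hZ k (mem_range.1 hk))).integrable_sq.const_mul _
  have htail_int : Integrable (fun ω ↦ ∑' k, η (k + n) * X (k + n) ω ^ 2) μ :=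
    integrable_tsum_of_summable_integral_norm (fun k ↦ (hX _).integrable_sq.const_mul _)
      (summable_integral_norm_mul_sq (fun k ↦ hη _) hsum_n fun k ↦ hXvar _)
  have hpointwise : ∀ᵐ ω ∂μ,
      ‖∑' k, (√(η k) * X k ω) • e k - ∑ k ∈ range n, (√(η k) * Z k ω) • e k‖ ^ 2
        = ∑ k ∈ range n, η k * (X k ω - Z k ω) ^ 2 + ∑' k, η (k + n) * X (k + n) ω ^ 2 := by
    filter_upwards [ae_summable_sqrt_mul_sq hη hsum hX hXvar] with ω hω
    simp only [he.norm_tsum_smul_sub_sum_smul_sq hω, ← mul_sub, sqrt_mul_sq_eq (hη _)]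
  rw [integral_congr_ae hpointwise, integral_add (integrable_finsetSum _ hhead_int) htail_int,
    integral_finsetSum _ hhead_int, integral_tsum_mul_sq (fun k ↦ hη _) hsum_n (fun k ↦ hX _)
      fun k ↦ hXvar _]
  simp_rw [integral_const_mul]

end SquareSeries

theorem noise_approximation_error_general
    {H : Type*} [NormedAddCommGroup H] [InnerProductSpace ℝ H] [CompleteSpace H]
    {Ω : Type*} [MeasurableSpace Ω] (μ : Measure Ω)
    (e : ℕ → H) (he : Orthonormal ℝ e)
    (t T εL : ℝ) (htT : t ≤ T)
    (η : ℕ → ℝ) (hη : ∀ k, 0 ≤ η k) (hsum : Summable η)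
    (N : ℕ)
    (X : ℕ → Ω → ℝ) (hX : ∀ k, MemLp (X k) 2 μ)
    (hXvar : ∀ k, ∫ ω, (X k ω) ^ 2 ∂μ = t)
    (Y : ℕ → Ω → ℝ) (hY : ∀ k < N, MemLp (Y k) 2 μ)
    (hXY : ∀ k < N, ∫ ω, (X k ω - Y k ω) ^ 2 ∂μ ≤ εL) :
    ∃ L : Ω → H, MemLp L 2 μ
      ∧ Tendsto
          (fun n => ∫ ω,
            ‖L ω - ∑ k ∈ Finset.range n, (Real.sqrt (η k) * X k ω) • e k‖ ^ 2 ∂μ)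
          atTop (nhds 0)
      ∧ (∫ ω, ‖L ω - ∑ k ∈ Finset.range N, (Real.sqrt (η k) * Y k ω) • e k‖ ^ 2 ∂μ
          ≤ t * (∑' k, η (k + N)) + εL * ∑ k ∈ Finset.range N, η k)
      ∧ t * (∑' k, η (k + N)) + εL * ∑ k ∈ Finset.range N, η k
          ≤ T * (∑' k, η (k + N)) + εL * ∑ k ∈ Finset.range N, η k := by
  refine ⟨_, he.memLp_two_tsum_sqrt_mul_smul hη hsum hX hXvar, ?_, ?_, ?_⟩
  · simp_rw [he.integral_norm_tsum_sqrt_mul_smul_sub_sum_sq hη hsum hX hXvar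
      fun k _ ↦ hX k, sub_self]
    simpa using (tendsto_sum_nat_add η).const_mul t
  · rw [he.integral_norm_tsum_sqrt_mul_smul_sub_sum_sq hη hsum hX hXvar hY, add_comm,
      mul_sum]
    gcongr t * ∑' k, η (k + N) + ∑ k ∈ range N, ?_ with k hk
    rw [mul_comm εL]
    exact mul_le_mul_of_nonneg_left (hXY k (mem_range.1 hk)) (hη k)
  · gcongr
    exact tsum_nonneg fun k ↦ hη _

/-- Overall noise approximation error: with an orthonormal system `(e_k)` in `H`,
nonnegative summable `(η_k)`, marginals `X_k` with `E(X_k²) = t`, and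
approximations `Y_k` with `E((X_k − Y_k)²) ≤ ε_L` for `k < N`, the series
`L = ∑_k √η_k X_k e_k` converges in `L²(Ω; H)` and
`E‖L − ∑_{k<N} √η_k Y_k e_k‖² ≤ t·∑_{k≥N} η_k + ε_L·∑_{k<N} η_k
  ≤ T·∑_{k≥N} η_k + ε_L·∑_{k<N} η_k`. -/
theorem noise_approximation_error
    {H : Type*} [NormedAddCommGroup H] [InnerProductSpace ℝ H] [CompleteSpace H]
    {Ω : Type*} [MeasurableSpace Ω] (μ : Measure Ω) [IsProbabilityMeasure μ]
    (e : ℕ → H) (he : Orthonormal ℝ e)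
    (t T εL : ℝ) (ht : 0 ≤ t) (htT : t ≤ T) (hεL : 0 ≤ εL)
    (η : ℕ → ℝ) (hη : ∀ k, 0 ≤ η k) (hsum : Summable η)
    (N : ℕ)
    (X : ℕ → Ω → ℝ) (hX : ∀ k, MemLp (X k) 2 μ)
    (hXvar : ∀ k, ∫ ω, (X k ω) ^ 2 ∂μ = t)
    (Y : ℕ → Ω → ℝ) (hY : ∀ k < N, MemLp (Y k) 2 μ)
    (hXY : ∀ k < N, ∫ ω, (X k ω - Y k ω) ^ 2 ∂μ ≤ εL) :
    ∃ L : Ω → H, MemLp L 2 μ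
      ∧ Tendsto
          (fun n => ∫ ω,
            ‖L ω - ∑ k ∈ Finset.range n, (Real.sqrt (η k) * X k ω) • e k‖ ^ 2 ∂μ)
          atTop (nhds 0)
      ∧ (∫ ω, ‖L ω - ∑ k ∈ Finset.range N, (Real.sqrt (η k) * Y k ω) • e k‖ ^ 2 ∂μ
          ≤ t * (∑' k, η (k + N)) + εL * ∑ k ∈ Finset.range N, η k)
      ∧ t * (∑' k, η (k + N)) + εL * ∑ k ∈ Finset.range N, η k
          ≤ T * (∑' k, η (k + N)) + εL * ∑ k ∈ Finset.range N, η k :=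
  noise_approximation_error_general μ e he t T εL htT η hη hsum N X hX hXvar Y hY hXY
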